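/- Let Ω = [0,2π]^d, κ > 0, 0 < ε < κ, and let W ∈ C²(ℝ) satisfy b₁z^{2m} − b₂ ≤ W(z) + (ε/2)z² for all z, with b₁, b₂ > 0 and integer m > 1. Then there exist constants γ₀ > 0 and C₀ ≥ 0 (depending only on κ, ε, b₁, b₂, m, |Ω|) such that for every Ω-periodic u ∈ H²(Ω), ∫_Ω [W(u) + κ((1/2)u² − |∇u|² + (1/2)|Δu|²)] dx ≥ γ₀ (∫_Ω u² dx + ∫_Ω |Δu|² dx) − C₀. -/

import Mathlib

/-!
Integrating `|∇u|²` by parts, with the boundary terms cancelling by periodicity, turns the energy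
density into `W(u) + (κ/2)(u + Δu)²`. Since `m > 1`, the term `b₁ u^{2m}` of the growth bound
dominates every multiple of `u²` up to an additive constant; this absorbs `-(ε/2)u²` and leaves a
coercive multiple of `u²`, and `(Δu)² ≤ 2(u + Δu)² + 2u²` then controls the Laplacian.
-/

open MeasureTheory Real

noncomputable def pd {d : ℕ} (i : Fin d) (f : (Fin d → ℝ) → ℝ) (x : Fin d → ℝ) : ℝ :=
  fderiv ℝ f x (Pi.single i 1)

noncomputable def gradNormSq {d : ℕ} (u : (Fin d → ℝ) → ℝ) (x : Fin d → ℝ) : ℝ :=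
  ∑ i, (pd i u x) ^ 2

noncomputable def lap {d : ℕ} (u : (Fin d → ℝ) → ℝ) (x : Fin d → ℝ) : ℝ :=
  ∑ i, pd i (pd i u) x

def Box (d : ℕ) : Set (Fin d → ℝ) := Set.univ.pi fun _ => Set.Icc 0 (2 * π)

def BoxPeriodic {d : ℕ} (u : (Fin d → ℝ) → ℝ) : Prop :=
  ∀ x i, u (x + Pi.single i (2 * π)) = u x

theorem box_eq_Icc (d : ℕ) : Box d = Set.Icc 0 fun _ => 2 * π := by
  rw [← Set.pi_univ_Icc]; rfl

theorem measurableSet_box (d : ℕ) : MeasurableSet (Box d) := by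
  rw [box_eq_Icc]; exact measurableSet_Icc

theorem Continuous.integrableOn_box {d : ℕ} {f : (Fin d → ℝ) → ℝ} (hf : Continuous f) :
    IntegrableOn f (Box d) := by
  rw [box_eq_Icc]; exact hf.integrableOn_Icc

theorem volume_real_box (d : ℕ) : volume.real (Box d) = (2 * π) ^ d := by
  rw [box_eq_Icc, measureReal_def, Real.volume_Icc_pi_toReal fun _ => by positivity]
  simp

section PartialDerivative

variable {d : ℕ} (i : Fin d)

theorem continuous_pd {f : (Fin d → ℝ) → ℝ} (hf : ContDiff ℝ 1 f) : Continuous (pd i f) :=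
  (hf.continuous_fderiv one_ne_zero).clm_apply continuous_const

theorem contDiff_pd {n : ℕ} {f : (Fin d → ℝ) → ℝ} (hf : ContDiff ℝ (n + 1) f) :
    ContDiff ℝ n (pd i f) :=
  (hf.fderiv_right le_rfl).clm_apply contDiff_const

theorem pd_mul {f g : (Fin d → ℝ) → ℝ} (hf : Differentiable ℝ f) (hg : Differentiable ℝ g)
    (x : Fin d → ℝ) : pd i (fun y => f y * g y) x = pd i f x * g x + f x * pd i g x := by
  simp only [pd, fderiv_fun_mul (hf x) (hg x), _root_.add_apply,
    _root_.smul_apply, smul_eq_mul]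
  ring

theorem BoxPeriodic.pd {u : (Fin d → ℝ) → ℝ} (hu : BoxPeriodic u) : BoxPeriodic (pd i u) := by
  intro x j
  rw [_root_.pd, ← fderiv_comp_add_right, funext fun y => hu y j, _root_.pd]

theorem BoxPeriodic.mul {f g : (Fin d → ℝ) → ℝ} (hf : BoxPeriodic f) (hg : BoxPeriodic g) :
    BoxPeriodic fun x => f x * g x := fun x j => congrArg₂ (· * ·) (hf x j) (hg x j)

theorem integral_pd_eq_zero {h : (Fin d → ℝ) → ℝ} (hh : ContDiff ℝ 1 h) (hper : BoxPeriodic h) :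
    ∫ x in Box d, pd i h x = 0 := by
  obtain ⟨n, rfl⟩ := Nat.exists_eq_add_one.mpr i.pos
  -- the divergence theorem for the vector field `h eᵢ`
  have hdiv : (fun x => ∑ j, (if j = i then fderiv ℝ h x else 0) (Pi.single j 1)) = pd i h := by
    funext x
    rw [Finset.sum_eq_single i] <;> simp +contextual [_root_.pd]
  have key := integral_divergence_of_hasFDerivAt_off_countable' 0 (fun _ => 2 * π)
    (fun j => by positivity) (fun j x => if j = i then h x else 0)
    (fun j x => if j = i then fderiv ℝ h x else 0) ∅ Set.countable_empty
    (fun j => by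
      split_ifs
      · exact hh.continuous.continuousOn
      · exact continuousOn_const)
    (fun x _ j => by
      split_ifs
      · exact (hh.differentiable one_ne_zero x).hasFDerivAt
      · exact hasFDerivAt_const 0 x)
    (by rw [hdiv, ← box_eq_Icc]; exact (continuous_pd i hh).integrableOn_box)
  rw [hdiv, ← box_eq_Icc] at key
  rw [key]
  refine Finset.sum_eq_zero fun j _ => ?_
  split_ifs with hj
  · subst hj
    have hface (y : Fin n → ℝ) :
        (j.insertNth (2 * π) y : Fin (n + 1) → ℝ) = j.insertNth 0 y + Pi.single j (2 * π) := by
      rw [← Fin.insertNth_zero_right, ← Fin.insertNth_add, zero_add, add_zero]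
    simp [hface, hper _ j]
  · simp

end PartialDerivative

theorem continuous_gradNormSq {d : ℕ} {u : (Fin d → ℝ) → ℝ} (hu : ContDiff ℝ 1 u) :
    Continuous (gradNormSq u) :=
  continuous_finsetSum _ fun i _ => (continuous_pd i hu).pow 2

theorem continuous_lap {d : ℕ} {u : (Fin d → ℝ) → ℝ} (hu : ContDiff ℝ 2 u) :
    Continuous (lap u) :=
  continuous_finsetSum _ fun i _ => continuous_pd i (contDiff_pd i hu)

theorem integral_gradNormSq_add_mul_lap {d : ℕ} {u : (Fin d → ℝ) → ℝ} (hu : ContDiff ℝ 2 u)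
    (hper : BoxPeriodic u) : ∫ x in Box d, (gradNormSq u x + u x * lap u x) = 0 := by
  have hpu (i : Fin d) : ContDiff ℝ 1 (pd i u) := contDiff_pd i hu
  have hu1 : ContDiff ℝ 1 u := hu.of_le (by norm_num)
  have hprod (i : Fin d) (x : Fin d → ℝ) :
      pd i (fun y => u y * pd i u y) x = pd i u x ^ 2 + u x * pd i (pd i u) x := by
    rw [pd_mul i (hu1.differentiable one_ne_zero) ((hpu i).differentiable one_ne_zero)]
    ring
  have hsum (x : Fin d → ℝ) :
      gradNormSq u x + u x * lap u x = ∑ i, pd i (fun y => u y * pd i u y) x := by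
    simp only [hprod, gradNormSq, lap, Finset.mul_sum, Finset.sum_add_distrib]
  simp only [hsum]
  rw [integral_finsetSum]
  · exact Finset.sum_eq_zero fun i _ =>
      integral_pd_eq_zero i (hu1.mul (hpu i)) (hper.mul (hper.pd i))
  · exact fun i _ => (continuous_pd i (hu1.mul (hpu i))).integrableOn_box

theorem integral_energy_eq {d : ℕ} {κ : ℝ} {W : ℝ → ℝ} (hW : Continuous W)
    {u : (Fin d → ℝ) → ℝ} (hu : ContDiff ℝ 2 u) (hper : BoxPeriodic u) :
    ∫ x in Box d, (W (u x) + κ * ((1 / 2) * (u x) ^ 2 - gradNormSq u x + (1 / 2) * (lap u x) ^ 2))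
      = ∫ x in Box d, (W (u x) + κ / 2 * (u x + lap u x) ^ 2) := by
  have hu0 := hu.continuous
  have hL := continuous_lap hu
  have hG := continuous_gradNormSq (hu.of_le (by norm_num))
  have hsplit (x : Fin d → ℝ) :
      W (u x) + κ * ((1 / 2) * (u x) ^ 2 - gradNormSq u x + (1 / 2) * (lap u x) ^ 2)
        = W (u x) + κ / 2 * (u x + lap u x) ^ 2 - κ * (gradNormSq u x + u x * lap u x) := by
    ring
  simp only [hsplit]
  rw [integral_sub (by fun_prop : Continuous _).integrableOn_box
      (by fun_prop : Continuous _).integrableOn_box,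
    integral_const_mul, integral_gradNormSq_add_mul_lap hu hper, mul_zero, sub_zero]

theorem exists_mul_sq_le_mul_pow_add {m : ℕ} (hm : 1 < m) {b : ℝ} (hb : 0 < b) (c : ℝ) :
    ∃ C, ∀ z : ℝ, c * z ^ 2 ≤ b * z ^ (2 * m) + C := by
  refine ⟨|c| * max 1 (|c| / b), fun z => ?_⟩
  rw [pow_mul]
  have ht : 0 ≤ z ^ 2 := sq_nonneg z
  have hc : c * z ^ 2 ≤ |c| * z ^ 2 := mul_le_mul_of_nonneg_right (le_abs_self c) ht
  rcases le_or_gt (z ^ 2) (max 1 (|c| / b)) with hsmall | hlarge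
  · have : 0 ≤ b * (z ^ 2) ^ m := by positivity
    nlinarith [abs_nonneg c]
  · have h1 : 1 ≤ z ^ 2 := (le_max_left _ _).trans hlarge.le
    have hcb : |c| ≤ b * z ^ 2 := by
      rw [← div_le_iff₀' hb]; exact (le_max_right _ _).trans hlarge.le
    calc c * z ^ 2 ≤ b * z ^ 2 * z ^ 2 := hc.trans (mul_le_mul_of_nonneg_right hcb ht)
      _ = b * (z ^ 2) ^ 2 := by ring
      _ ≤ b * (z ^ 2) ^ m := mul_le_mul_of_nonneg_left (pow_le_pow_right₀ h1 hm) hb.le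
      _ ≤ b * (z ^ 2) ^ m + |c| * max 1 (|c| / b) := le_add_of_nonneg_right (by positivity)

theorem exists_sq_add_sq_le_density {κ ε b₁ b₂ : ℝ} {m : ℕ} {W : ℝ → ℝ} (hκ : 0 ≤ κ)
    (hm : 1 < m) (hb₁ : 0 < b₁) (hgrow : ∀ z : ℝ, b₁ * z ^ (2 * m) - b₂ ≤ W z + ε / 2 * z ^ 2) :
    ∃ C, ∀ z L : ℝ, κ / 4 * (z ^ 2 + L ^ 2) - C ≤ W z + κ / 2 * (z + L) ^ 2 := by
  obtain ⟨C, hC⟩ := exists_mul_sq_le_mul_pow_add hm hb₁ (3 * κ / 4 + ε / 2)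
  refine ⟨C + b₂, fun z L => ?_⟩
  -- `L² ≤ 2 (z + L)² + 2 z²`, with defect `(2 z + L)²`
  nlinarith [hC z, hgrow z, mul_nonneg hκ (sq_nonneg (2 * z + L))]

theorem stmt9_general (d : ℕ) (κ ε : ℝ) (hε : 0 < ε) (hεκ : ε < κ)
    (W : ℝ → ℝ) (hW : ContDiff ℝ 2 W) (m : ℕ) (hm : 1 < m)
    (b₁ b₂ : ℝ) (hb₁ : 0 < b₁)
    (hgrow : ∀ z : ℝ, b₁ * z ^ (2 * m) - b₂ ≤ W z + ε / 2 * z ^ 2) :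
    ∃ γ₀ C₀ : ℝ, 0 < γ₀ ∧ 0 ≤ C₀ ∧
      ∀ u : (Fin d → ℝ) → ℝ, ContDiff ℝ 2 u →
        (∀ x : Fin d → ℝ, ∀ i : Fin d, u (x + Pi.single i (2 * π)) = u x) →
        γ₀ * ((∫ x in Box d, (u x) ^ 2) + ∫ x in Box d, (lap u x) ^ 2) - C₀
          ≤ ∫ x in Box d,
              (W (u x) + κ * ((1 / 2) * (u x) ^ 2 - gradNormSq u x
                + (1 / 2) * (lap u x) ^ 2)) := by
  obtain ⟨C, hC⟩ := exists_sq_add_sq_le_density (κ := κ) (by linarith) hm hb₁ hgrow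
  refine ⟨κ / 4, (2 * π) ^ d * max C 0, by linarith, by positivity, fun u hu hper => ?_⟩
  have hu0 := hu.continuous
  have hL := continuous_lap hu
  have hWu : Continuous fun x => W (u x) := hW.continuous.comp hu0
  rw [integral_energy_eq hW.continuous hu hper]
  calc κ / 4 * ((∫ x in Box d, u x ^ 2) + ∫ x in Box d, lap u x ^ 2) - (2 * π) ^ d * max C 0
      ≤ κ / 4 * ((∫ x in Box d, u x ^ 2) + ∫ x in Box d, lap u x ^ 2) - (2 * π) ^ d * C := by
        gcongr; exact le_max_left C 0
    _ = ∫ x in Box d, (κ / 4 * (u x ^ 2 + lap u x ^ 2) - C) := by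
        rw [integral_sub (by fun_prop : Continuous _).integrableOn_box
            continuous_const.integrableOn_box, integral_const_mul,
          integral_add (by fun_prop : Continuous _).integrableOn_box
            (by fun_prop : Continuous _).integrableOn_box,
          setIntegral_const, volume_real_box, smul_eq_mul]
    _ ≤ ∫ x in Box d, (W (u x) + κ / 2 * (u x + lap u x) ^ 2) :=
        setIntegral_mono_on (by fun_prop : Continuous _).integrableOn_box
          (by fun_prop : Continuous _).integrableOn_box (measurableSet_box d)
          fun x _ => hC (u x) (lap u x)

theorem stmt9 (d : ℕ) (hd : 1 ≤ d) (hd3 : d ≤ 3) (κ ε : ℝ) (hε : 0 < ε) (hεκ : ε < κ)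
    (W : ℝ → ℝ) (hW : ContDiff ℝ 2 W) (m : ℕ) (hm : 1 < m)
    (b₁ b₂ : ℝ) (hb₁ : 0 < b₁) (hb₂ : 0 < b₂)
    (hgrow : ∀ z : ℝ, b₁ * z ^ (2 * m) - b₂ ≤ W z + ε / 2 * z ^ 2) :
    ∃ γ₀ C₀ : ℝ, 0 < γ₀ ∧ 0 ≤ C₀ ∧
      ∀ u : (Fin d → ℝ) → ℝ, ContDiff ℝ 2 u →
        (∀ x : Fin d → ℝ, ∀ i : Fin d, u (x + Pi.single i (2 * π)) = u x) →
        γ₀ * ((∫ x in Box d, (u x) ^ 2) + ∫ x in Box d, (lap u x) ^ 2) - C₀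
          ≤ ∫ x in Box d,
              (W (u x) + κ * ((1 / 2) * (u x) ^ 2 - gradNormSq u x
                + (1 / 2) * (lap u x) ^ 2)) :=
  stmt9_general d κ ε hε hεκ W hW m hm b₁ b₂ hb₁ hgrow
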